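/- Given morphisms α : (d,m) → (e,n) and β : (e,n) → (f,p) in 𝒱_r and a permutation σ ∈ Σ_p, one has σ(β ∘ α) = σ(β) ∘ τ(α), where τ ∈ Σ_n is the permutation induced by σ with respect to β₁ (i.e., the unique τ with σ ∘ β₁ ∘ τ⁻¹ order-preserving). -/

import Mathlib

open scoped Classical

/-- A morphism `(d,m) → (e,n)` in the Veronese category `𝒱_r`.  Here `M(e)` is realized as
the set of functions `Fin r → ℕ` with coordinate sum `e`. -/
structure VMor (r d m e n : ℕ) where
  hde : d ≤ e
  α₁ : Fin m → Fin n
  mono : StrictMono α₁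
  α₂ : ∀ i : Fin n, i ∉ Set.range α₁ → Fin r → ℕ
  hα₂ : ∀ i hi, ∑ t, α₂ i hi t = e
  α₃ : Fin m → Fin r → ℕ
  hα₃ : ∀ i, ∑ t, α₃ i t = e - d

namespace VMor

variable {r d m e n f p : ℕ}

/-- Composition in the Veronese category. -/
noncomputable def comp (β : VMor r e n f p) (α : VMor r d m e n) : VMor r d m f p where
  hde := α.hde.trans β.hde
  α₁ := β.α₁ ∘ α.α₁
  mono := β.mono.comp α.mono
  α₂ := fun i hi =>
    if h : ∃ i', β.α₁ i' = i then
      α.α₂ h.choose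
          (fun hc => hi (Set.mem_range.mpr ⟨(Set.mem_range.mp hc).choose, by
            rw [Function.comp_apply, (Set.mem_range.mp hc).choose_spec, h.choose_spec]⟩))
        + β.α₃ h.choose
    else β.α₂ i fun hmem => h (Set.mem_range.mp hmem)
  hα₂ := fun i hi => by
    split
    · rename_i h
      simp only [Pi.add_apply]
      rw [Finset.sum_add_distrib, α.hα₂, β.hα₃]
      have h1 := α.hde
      have h2 := β.hde
      omega
    · exact β.hα₂ _ _
  α₃ := fun i => α.α₃ i + β.α₃ (α.α₁ i)
  hα₃ := fun i => by
    simp only [Pi.add_apply]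
    rw [Finset.sum_add_distrib, α.hα₃, β.hα₃]
    have h1 := α.hde
    have h2 := β.hde
    omega

/-- The identity morphism `(d,m) → (d,m)`, given by the identity injection and zero
vectors for `α₃`. -/
def id (r d m : ℕ) : VMor r d m d m where
  hde := le_refl d
  α₁ := _root_.id
  mono := strictMono_id
  α₂ := fun i hi => absurd ⟨i, rfl⟩ hi
  hα₂ := fun i hi => absurd ⟨i, rfl⟩ hi
  α₃ := fun _ _ => 0
  hα₃ := fun _ => by simp

end VMor

namespace VMor

variable {r d m e n : ℕ}

/-- The action of `σ ∈ Σ_n` on morphisms `(d,m) → (e,n)`.  With `τ` the permutation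
induced by `σ` with respect to `α₁` (the unique `τ` with `σ ∘ α₁ ∘ τ⁻¹` order-preserving;
here `τ⁻¹ = Tuple.sort (σ ∘ α₁)`), we set `σ(α)₁ = σ ∘ α₁ ∘ τ⁻¹`, `σ(α)₂ = α₂ ∘ σ⁻¹` and
`σ(α)₃ = α₃ ∘ τ⁻¹`. -/
noncomputable def permAct (σ : Equiv.Perm (Fin n)) (α : VMor r d m e n) :
    VMor r d m e n where
  hde := α.hde
  α₁ := (⇑σ ∘ α.α₁) ∘ ⇑(Tuple.sort (⇑σ ∘ α.α₁))
  mono := by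
    refine Monotone.strictMono_of_injective ?_ ?_
    · exact Tuple.monotone_sort (⇑σ ∘ α.α₁)
    · exact ((σ.injective.comp α.mono.injective).comp (Tuple.sort (⇑σ ∘ α.α₁)).injective)
  α₂ := fun i hi =>
    α.α₂ (σ⁻¹ i) (fun hc =>
      hi ⟨(Tuple.sort (⇑σ ∘ α.α₁))⁻¹ (Set.mem_range.mp hc).choose, by
        simp only [Function.comp_apply, Equiv.Perm.coe_inv, Equiv.apply_symm_apply,
          (Set.mem_range.mp hc).choose_spec]⟩)
  hα₂ := fun i hi => α.hα₂ _ _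
  α₃ := fun i => α.α₃ (Tuple.sort (⇑σ ∘ α.α₁) i)
  hα₃ := fun i => α.hα₃ _

end VMor

namespace VMor

/-- Uniqueness of the sorting permutation for injective tuples. -/
theorem sort_unique {q : ℕ} {γ : Type*} [LinearOrder γ] {g : Fin q → γ}
    (π : Equiv.Perm (Fin q)) (h : StrictMono (g ∘ π)) : π = Tuple.sort g :=
  Tuple.eq_sort_iff.mpr ⟨h.monotone, fun i j hij hg => absurd hg (h hij).ne⟩

theorem α₂_congr {r d m e n : ℕ} (A : VMor r d m e n) {i j : Fin n} (h : i = j)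
    (hi : i ∉ Set.range A.α₁) (hj : j ∉ Set.range A.α₁) : A.α₂ i hi = A.α₂ j hj := by
  subst h; rfl

theorem ext' {r d m e n : ℕ} {A B : VMor r d m e n}
    (h1 : A.α₁ = B.α₁)
    (h2 : ∀ i hi hi', A.α₂ i hi = B.α₂ i hi')
    (h3 : A.α₃ = B.α₃) : A = B := by
  obtain ⟨_, a1, _, a2, _, a3, _⟩ := A
  obtain ⟨_, b1, _, b2, _, b3, _⟩ := B
  dsimp at h1 h2 h3
  subst h1 h3
  simp only [mk.injEq, heq_eq_eq, true_and, and_true]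
  funext i hi
  exact h2 i hi hi

end VMor

/-- For `α : (d,m) → (e,n)`, `β : (e,n) → (f,p)` and `σ ∈ Σ_p`, one has
`σ(β ∘ α) = σ(β) ∘ τ(α)`, where `τ = (Tuple.sort (σ ∘ β₁))⁻¹` is the permutation induced
by `σ` with respect to `β₁` (the unique `τ` with `σ ∘ β₁ ∘ τ⁻¹` order-preserving). -/
theorem permAct_comp (r d m e n f p : ℕ)
    (α : VMor r d m e n) (β : VMor r e n f p) (σ : Equiv.Perm (Fin p)) :
    VMor.permAct σ (β.comp α) =
      (VMor.permAct σ β).comp (VMor.permAct (Tuple.sort (⇑σ ∘ β.α₁))⁻¹ α) := by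
  set s : Equiv.Perm (Fin n) := Tuple.sort (⇑σ ∘ β.α₁) with hs
  have hcomp₁ : (β.comp α).α₁ = β.α₁ ∘ α.α₁ := rfl
  have hkey : Tuple.sort (⇑σ ∘ (β.comp α).α₁) = Tuple.sort (⇑s⁻¹ ∘ α.α₁) := by
    symm
    apply VMor.sort_unique
    have hmono : StrictMono ((VMor.permAct σ β).α₁ ∘ (VMor.permAct s⁻¹ α).α₁) :=
      (VMor.permAct σ β).mono.comp (VMor.permAct s⁻¹ α).mono
    convert hmono using 1
    funext i
    simp [VMor.permAct, VMor.comp, Function.comp, hs]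
  apply VMor.ext'
  · funext i
    show (⇑σ ∘ (β.comp α).α₁) (Tuple.sort (⇑σ ∘ (β.comp α).α₁) i) = _
    rw [hkey]
    simp [VMor.permAct, VMor.comp, Function.comp, hs]
  · intro i hi hi'
    simp only [VMor.permAct, VMor.comp]
    by_cases h1 : ∃ i', β.α₁ i' = σ⁻¹ i
    · have h2 : ∃ i', ((⇑σ ∘ β.α₁) ∘ ⇑(Tuple.sort (⇑σ ∘ β.α₁))) i' = i := by
        refine ⟨s⁻¹ h1.choose, ?_⟩
        show σ (β.α₁ (s (s⁻¹ h1.choose))) = i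
        rw [Equiv.Perm.coe_inv, Equiv.apply_symm_apply, h1.choose_spec, Equiv.Perm.coe_inv, Equiv.apply_symm_apply]
      rw [dif_pos h1, dif_pos h2]
      have hch : s h2.choose = h1.choose := by
        apply β.mono.injective
        rw [h1.choose_spec]
        apply σ.injective
        rw [Equiv.Perm.coe_inv, Equiv.apply_symm_apply]
        exact h2.choose_spec
      congr 1
      · exact VMor.α₂_congr α (by rw [inv_inv]; exact hch.symm) _ _
      · exact congrArg β.α₃ hch.symm
    · have h2 : ¬ ∃ i', ((⇑σ ∘ β.α₁) ∘ ⇑(Tuple.sort (⇑σ ∘ β.α₁))) i' = i := by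
        rintro ⟨j, hj⟩
        refine h1 ⟨s j, ?_⟩
        rw [← hj]
        simp [hs]
      rw [dif_neg h1, dif_neg h2]
  · funext i
    show (β.comp α).α₃ (Tuple.sort (⇑σ ∘ (β.comp α).α₁) i) = _
    rw [hkey]
    simp [VMor.permAct, VMor.comp, Function.comp, hs]
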